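/- Let α ∈ (0,1) be irrational and let N ≥ 1 have canonical Ostrowski digits b_n, …, b_0 with respect to α. Then for every real β ≥ 1: Σ_{r=0}^{n} b_r · Σ_{t=1}^{q_r − 1} (q_r/t)^β < N^β · (1 + log q_n), and if moreover β > 1 then Σ_{r=0}^{n} b_r · Σ_{t=1}^{q_r − 1} (q_r/t)^β < ζ(β)·N^β, where ζ is the Riemann zeta function. -/

import Mathlib

open Finset

/-- Complete quotients of `α`: `a'₀ = α`, `a'_{n+1} = 1/(a'_n - ⌊a'_n⌋)`. -/
noncomputable def cq (α : ℝ) : ℕ → ℝ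
  | 0 => α
  | n + 1 => 1 / (cq α n - (⌊cq α n⌋ : ℝ))

/-- Partial quotients `a_n = ⌊a'_n⌋`. -/
noncomputable def aq (α : ℝ) (n : ℕ) : ℕ := (⌊cq α n⌋).toNat

/-- Quasiperiods: `q₋₂ = 1`, `q₋₁ = 0`, `q_n = a_n q_{n-1} + q_{n-2}` (so `q₀ = 1`, `q₁ = a₁`). -/
noncomputable def qp (α : ℝ) : ℕ → ℕ
  | 0 => 1
  | 1 => aq α 1
  | n + 2 => aq α (n + 2) * qp α (n + 1) + qp α n

/-- Error periods: `q'_n = a'_n q_{n-1} + q_{n-2}` (so `q'₀ = 1`, `q'₁ = a'₁`). -/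
noncomputable def qe (α : ℝ) : ℕ → ℝ
  | 0 => 1
  | 1 => cq α 1
  | n + 2 => cq α (n + 2) * (qp α (n + 1) : ℝ) + (qp α n : ℝ)

/-- Convergent numerators: `p₋₂ = 0`, `p₋₁ = 1`, `p_n = a_n p_{n-1} + p_{n-2}`
(so for `0 < α < 1`, `p₀ = 0`, `p₁ = 1`). -/
noncomputable def pn (α : ℝ) : ℕ → ℕ
  | 0 => 0
  | 1 => 1
  | n + 2 => aq α (n + 2) * pn α (n + 1) + pn α n

/-- `p'_n = a'_n p_{n-1} + p_{n-2}` (so for `0 < α < 1`, `p'₀ = α`, `p'₁ = 1`). -/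
noncomputable def pe (α : ℝ) : ℕ → ℝ
  | 0 => α
  | 1 => 1
  | n + 2 => cq α (n + 2) * (pn α (n + 1) : ℝ) + (pn α n : ℝ)

/-- `ostN α N = max {r : q_r ≤ N}` (quasiperiods satisfy `q_r ≥ r`, so the bound `N` suffices). -/
noncomputable def ostN (α : ℝ) (N : ℕ) : ℕ :=
  Nat.findGreatest (fun r => qp α r ≤ N) N

/-- The remainders of the greedy Ostrowski algorithm: `ostM α N k = M_{n-k}` where
`M_n = N` and `M_{r-1} = M_r % q_r`. -/
noncomputable def ostM (α : ℝ) (N : ℕ) : ℕ → ℕ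
  | 0 => N
  | k + 1 => ostM α N k % qp α (ostN α N - k)

/-- The canonical (greedy) Ostrowski digits: `b_r = ⌊M_r / q_r⌋`. -/
noncomputable def ostDigit (α : ℝ) (N r : ℕ) : ℕ :=
  ostM α N (ostN α N - r) / qp α r


/-! ### Auxiliary lemmas -/

lemma cq_irr (α : ℝ) (hirr : Irrational α) : ∀ n, Irrational (cq α n)
  | 0 => hirr
  | n + 1 => by
    have h := cq_irr α hirr n
    have h2 : Irrational (cq α n - (⌊cq α n⌋ : ℝ)) := h.sub_intCast _
    have he : cq α (n+1) = (cq α n - (⌊cq α n⌋ : ℝ))⁻¹ := by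
      rw [show cq α (n+1) = 1 / (cq α n - (⌊cq α n⌋ : ℝ)) from rfl, one_div]
    rw [he]
    exact h2.inv

lemma cq_gt_one (α : ℝ) (hirr : Irrational α) (n : ℕ) : 1 < cq α (n + 1) := by
  have h := cq_irr α hirr n
  have hlt : (⌊cq α n⌋ : ℝ) < cq α n := by
    rcases (Int.floor_le (cq α n)).lt_or_eq with hlt | heq
    · exact hlt
    · exact absurd heq.symm (h.ne_int _)
  have hlt1 : cq α n - (⌊cq α n⌋ : ℝ) < 1 := by
    have := Int.lt_floor_add_one (cq α n); linarith
  have hpos : (0:ℝ) < cq α n - (⌊cq α n⌋ : ℝ) := by linarith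
  rw [show cq α (n+1) = 1 / (cq α n - (⌊cq α n⌋ : ℝ)) from rfl]
  exact one_lt_one_div hpos hlt1

lemma aq_pos (α : ℝ) (hirr : Irrational α) (n : ℕ) : 1 ≤ aq α (n + 1) := by
  have h := cq_gt_one α hirr n
  have h2 : (1 : ℤ) ≤ ⌊cq α (n + 1)⌋ := Int.le_floor.mpr (by exact_mod_cast h.le)
  unfold aq; omega

lemma qp_pos (α : ℝ) (hirr : Irrational α) : ∀ n, 1 ≤ qp α n
  | 0 => le_refl 1
  | 1 => aq_pos α hirr 0
  | n + 2 => by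
    have := qp_pos α hirr n
    rw [show qp α (n+2) = aq α (n + 2) * qp α (n + 1) + qp α n from rfl]
    omega

lemma qp_mono (α : ℝ) (hirr : Irrational α) : Monotone (qp α) := by
  apply monotone_nat_of_le_succ
  intro n
  match n with
  | 0 => simpa [show qp α 0 = 1 from rfl, show qp α 1 = aq α 1 from rfl] using aq_pos α hirr 0
  | n + 1 =>
    have ha := aq_pos α hirr (n + 1)
    have hq := qp_pos α hirr (n + 1)
    rw [show qp α (n+2) = aq α (n + 2) * qp α (n + 1) + qp α n from rfl]
    nlinarith

lemma ostM_step (α : ℝ) (N : ℕ) {k : ℕ} (hk : k ≤ ostN α N) :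
    ostM α N k = qp α (ostN α N - k) * ostDigit α N (ostN α N - k) + ostM α N (k + 1) := by
  have h1 : ostDigit α N (ostN α N - k) = ostM α N k / qp α (ostN α N - k) := by
    unfold ostDigit
    rw [Nat.sub_sub_self hk]
  have h2 : ostM α N (k+1) = ostM α N k % qp α (ostN α N - k) := rfl
  rw [h1, h2, Nat.div_add_mod]

lemma ostM_sum (α : ℝ) (N : ℕ) : ∀ m, m ≤ ostN α N →
    (∑ k ∈ Finset.range (m+1), qp α (ostN α N - k) * ostDigit α N (ostN α N - k))
      + ostM α N (m + 1) = N := by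
  intro m
  induction m with
  | zero => intro _; simpa [show ostM α N 0 = N from rfl] using (ostM_step α N (Nat.zero_le _)).symm
  | succ m ih =>
    intro h
    rw [Finset.sum_range_succ, add_assoc, ← ostM_step α N h]
    exact ih (by omega)

lemma ostM_last (α : ℝ) (N : ℕ) : ostM α N (ostN α N + 1) = 0 := by
  have h : ostM α N (ostN α N + 1) = ostM α N (ostN α N) % qp α (ostN α N - ostN α N) := rfl
  rw [h, Nat.sub_self]
  rw [show qp α 0 = 1 from rfl, Nat.mod_one]

lemma ostDigit_sum (α : ℝ) (N : ℕ) :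
    (∑ r ∈ Finset.range (ostN α N + 1), ostDigit α N r * qp α r) = N := by
  have h := ostM_sum α N (ostN α N) le_rfl
  rw [ostM_last, add_zero] at h
  have e : ∑ r ∈ Finset.range (ostN α N + 1), ostDigit α N r * qp α r
      = ∑ k ∈ Finset.range (ostN α N + 1),
          qp α (ostN α N - k) * ostDigit α N (ostN α N - k) := by
    rw [← Finset.sum_range_reflect
      (fun k => qp α (ostN α N - k) * ostDigit α N (ostN α N - k)) (ostN α N + 1)]
    apply Finset.sum_congr rfl
    intro j hj
    have hj' : j ≤ ostN α N := by simpa [Nat.lt_succ_iff] using hj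
    simp only [Nat.add_sub_cancel, Nat.sub_sub_self hj']
    ring
  rw [e]
  exact h

lemma sum_inv_le_one_add_log (m : ℕ) : ∑ t ∈ Finset.Icc 1 m, (1:ℝ)/t ≤ 1 + Real.log m := by
  have h1 := harmonic_le_one_add_log m
  have h2 : ((harmonic m : ℚ) : ℝ) = ∑ t ∈ Finset.Icc 1 m, (1:ℝ)/t := by
    rw [harmonic_eq_sum_Icc]
    push_cast
    simp [one_div]
  linarith [h2 ▸ h1]

lemma add_rpow_le' (x y : ℝ) (hx : 0 ≤ x) (hy : 0 ≤ y) {p : ℝ} (hp : 1 ≤ p) :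
    x ^ p + y ^ p ≤ (x + y) ^ p := by
  lift x to NNReal using hx
  lift y to NNReal using hy
  have := NNReal.add_rpow_le_rpow_add x y hp
  exact_mod_cast this

lemma sum_rpow_le_rpow_sum' {ι : Type*} (s : Finset ι) (f : ι → ℝ) (hf : ∀ i ∈ s, 0 ≤ f i)
    {p : ℝ} (hp : 1 ≤ p) : ∑ i ∈ s, f i ^ p ≤ (∑ i ∈ s, f i) ^ p := by
  induction s using Finset.cons_induction with
  | empty => simp [Real.zero_rpow (by linarith : p ≠ 0)]
  | cons a s ha ih =>
    rw [Finset.sum_cons, Finset.sum_cons]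
    have h1 := ih (fun i hi => hf i (Finset.mem_cons_of_mem hi))
    have h2 := add_rpow_le' (f a) (∑ i ∈ s, f i) (hf a (Finset.mem_cons_self a s))
      (Finset.sum_nonneg (fun i hi => hf i (Finset.mem_cons_of_mem hi))) hp
    linarith

lemma T_lt_log {β : ℝ} (hβ : 1 ≤ β) (q Q : ℕ) (hq : 1 ≤ q) (hqQ : q ≤ Q) :
    ∑ t ∈ Finset.Icc 1 (q-1), 1/(t:ℝ)^β < 1 + Real.log Q := by
  have hQ1 : (1:ℝ) ≤ (Q:ℝ) := by exact_mod_cast le_trans hq hqQ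
  have hlogQ : 0 ≤ Real.log Q := Real.log_nonneg hQ1
  rcases Nat.lt_or_ge q 2 with h2 | h2
  · have hq1 : q = 1 := by omega
    subst hq1
    simp only [Nat.sub_self]
    rw [Finset.Icc_eq_empty (by omega)]
    simp
    linarith
  · have step1 : ∑ t ∈ Finset.Icc 1 (q-1), 1/(t:ℝ)^β ≤ ∑ t ∈ Finset.Icc 1 (q-1), (1:ℝ)/t := by
      apply Finset.sum_le_sum
      intro t ht
      have ht1 : (1:ℝ) ≤ (t:ℝ) := by exact_mod_cast (Finset.mem_Icc.mp ht).1
      have hle : (t:ℝ)^(1:ℝ) ≤ (t:ℝ)^β := Real.rpow_le_rpow_of_exponent_le ht1 hβ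
      rw [Real.rpow_one] at hle
      exact one_div_le_one_div_of_le (by linarith) hle
    have step2 : ∑ t ∈ Finset.Icc 1 (q-1), (1:ℝ)/t ≤ 1 + Real.log ((q-1 : ℕ):ℝ) :=
      sum_inv_le_one_add_log _
    have hcast : ((q-1:ℕ):ℝ) = (q:ℝ) - 1 := by
      push_cast [Nat.cast_sub hq]; ring
    have step3 : Real.log ((q-1:ℕ):ℝ) < Real.log (q:ℝ) := by
      apply Real.log_lt_log
      · rw [hcast]
        have : (2:ℝ) ≤ (q:ℝ) := by exact_mod_cast h2
        linarith
      · rw [hcast]; linarith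
    have step4 : Real.log (q:ℝ) ≤ Real.log (Q:ℝ) := by
      have hq0 : (0:ℝ) < (q:ℝ) := by exact_mod_cast hq
      exact Real.log_le_log hq0 (by exact_mod_cast hqQ)
    linarith

lemma T_lt_zeta {β : ℝ} (hβ : 1 < β) (q : ℕ) (hq : 1 ≤ q) :
    ∑ t ∈ Finset.Icc 1 (q-1), 1/(t:ℝ)^β < ∑' n : ℕ, 1/(n:ℝ)^β := by
  have hsum : Summable (fun n : ℕ => 1/(n:ℝ)^β) := Real.summable_one_div_nat_rpow.mpr hβ
  have hle : ∑ t ∈ Finset.Icc 1 q, 1/(t:ℝ)^β ≤ ∑' n : ℕ, 1/(n:ℝ)^β :=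
    Summable.sum_le_tsum _ (fun i _ => by positivity) hsum
  obtain ⟨m, rfl⟩ : ∃ m, q = m + 1 := ⟨q - 1, by omega⟩
  have hsplit : ∑ t ∈ Finset.Icc 1 (m+1), 1/(t:ℝ)^β
      = ∑ t ∈ Finset.Icc 1 m, 1/(t:ℝ)^β + 1/((m+1:ℕ):ℝ)^β := by
    rw [Finset.sum_Icc_succ_top (by omega)]
  have hqpos : (0:ℝ) < ((m+1:ℕ):ℝ) := by positivity
  have hpos : 0 < 1/((m+1:ℕ):ℝ)^β := by
    have := Real.rpow_pos_of_pos hqpos β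
    positivity
  simp only [Nat.add_sub_cancel]
  linarith

lemma zeta_re_eq {β : ℝ} (hβ : 1 < β) :
    (riemannZeta (β : ℂ)).re = ∑' n : ℕ, 1/(n:ℝ)^β := by
  have h : riemannZeta (β:ℂ) = ∑' n : ℕ, 1/(n:ℂ)^(β:ℂ) :=
    zeta_eq_tsum_one_div_nat_cpow (by simpa using hβ)
  have h2 : ∀ n : ℕ, ((1/(n:ℝ)^β : ℝ) : ℂ) = 1/(n:ℂ)^(β:ℂ) := by
    intro n
    rw [Complex.ofReal_div, Complex.ofReal_one, Complex.ofReal_cpow (Nat.cast_nonneg n)]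
    norm_num
  have h3 : (∑' n : ℕ, 1/(n:ℂ)^(β:ℂ)) = (((∑' n : ℕ, 1/(n:ℝ)^β : ℝ)) : ℂ) := by
    rw [Complex.ofReal_tsum]
    exact (tsum_congr h2).symm
  rw [h, h3, Complex.ofReal_re]

lemma main_est (α : ℝ) (hirr : Irrational α) (N : ℕ) (hN : 1 ≤ N) {β : ℝ} (hβ : 1 ≤ β)
    (L : ℝ)
    (hT : ∀ r, r ≤ ostN α N → (∑ t ∈ Finset.Icc 1 (qp α r - 1), 1/(t:ℝ)^β) < L) :
    (∑ r ∈ Finset.Icc 0 (ostN α N), (ostDigit α N r : ℝ) *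
        ∑ t ∈ Finset.Icc 1 (qp α r - 1), ((qp α r : ℝ) / (t : ℝ)) ^ β) < (N : ℝ) ^ β * L := by
  have hβ0 : β ≠ 0 := by linarith
  have hIcc : Finset.Icc 0 (ostN α N) = Finset.range (ostN α N + 1) := by
    ext x; simp [Nat.lt_succ_iff]
  have hL : 0 < L :=
    lt_of_le_of_lt (Finset.sum_nonneg (fun t _ => by positivity)) (hT 0 (Nat.zero_le _))
  have hF : ∀ r, (ostDigit α N r : ℝ) *
        (∑ t ∈ Finset.Icc 1 (qp α r - 1), ((qp α r : ℝ)/(t:ℝ))^β)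
      = (ostDigit α N r : ℝ) *
        ((qp α r : ℝ)^β * ∑ t ∈ Finset.Icc 1 (qp α r - 1), 1/(t:ℝ)^β) := by
    intro r
    congr 1
    rw [Finset.mul_sum]
    apply Finset.sum_congr rfl
    intro t _
    rw [Real.div_rpow (by positivity) (by positivity), div_eq_mul_one_div]
  have key : ∑ r ∈ Finset.range (ostN α N + 1), ostDigit α N r * qp α r = N := ostDigit_sum α N
  have hex : ∃ r ∈ Finset.range (ostN α N + 1), ostDigit α N r * qp α r ≠ 0 := by
    apply Finset.exists_ne_zero_of_sum_ne_zero
    rw [key]; omega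
  obtain ⟨r0, hr0mem, hr0⟩ := hex
  have hpt : ∀ r ∈ Finset.range (ostN α N + 1),
      ((ostDigit α N r : ℝ) * (∑ t ∈ Finset.Icc 1 (qp α r - 1), ((qp α r : ℝ)/(t:ℝ))^β)
        ≤ L * ((ostDigit α N r * qp α r : ℕ) : ℝ)^β) ∧
      (ostDigit α N r ≠ 0 →
      (ostDigit α N r : ℝ) * (∑ t ∈ Finset.Icc 1 (qp α r - 1), ((qp α r : ℝ)/(t:ℝ))^β)
        < L * ((ostDigit α N r * qp α r : ℕ) : ℝ)^β) := by
    intro r hr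
    have hrn : r ≤ ostN α N := by simpa [Nat.lt_succ_iff] using hr
    rw [hF r]
    by_cases hb : ostDigit α N r = 0
    · refine ⟨?_, fun h => absurd hb h⟩
      rw [hb]
      push_cast
      rw [zero_mul, zero_mul, Real.zero_rpow hβ0, mul_zero]
    · have hb1 : (1:ℝ) ≤ (ostDigit α N r : ℝ) := by
        exact_mod_cast Nat.one_le_iff_ne_zero.mpr hb
      have hq1 : (1:ℝ) ≤ (qp α r : ℝ) := by exact_mod_cast qp_pos α hirr r
      have hqb : (0:ℝ) < (qp α r : ℝ)^β := Real.rpow_pos_of_pos (by linarith) β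
      have hTr := hT r hrn
      have hstrict : (ostDigit α N r : ℝ) *
          ((qp α r : ℝ)^β * ∑ t ∈ Finset.Icc 1 (qp α r - 1), 1/(t:ℝ)^β)
          < L * ((ostDigit α N r * qp α r : ℕ) : ℝ)^β := by
        have h1 : (ostDigit α N r : ℝ) *
            ((qp α r : ℝ)^β * ∑ t ∈ Finset.Icc 1 (qp α r - 1), 1/(t:ℝ)^β)
            < (ostDigit α N r : ℝ) * ((qp α r : ℝ)^β * L) := by
          apply mul_lt_mul_of_pos_left _ (by linarith : (0:ℝ) < (ostDigit α N r : ℝ))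
          exact mul_lt_mul_of_pos_left hTr hqb
        have h2 : (ostDigit α N r : ℝ) * ((qp α r : ℝ)^β * L)
            ≤ L * ((ostDigit α N r * qp α r : ℕ) : ℝ)^β := by
          have hbb : (ostDigit α N r : ℝ) ≤ (ostDigit α N r : ℝ)^β := by
            have h4 := Real.rpow_le_rpow_of_exponent_le hb1 hβ
            rwa [Real.rpow_one] at h4
          have hcast : ((ostDigit α N r * qp α r : ℕ) : ℝ)^β
              = (ostDigit α N r : ℝ)^β * (qp α r : ℝ)^β := by
            push_cast
            rw [Real.mul_rpow (by linarith) (by linarith)]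
          rw [hcast]
          have h3 : (ostDigit α N r : ℝ) * (qp α r : ℝ)^β
              ≤ (ostDigit α N r : ℝ)^β * (qp α r : ℝ)^β :=
            mul_le_mul_of_nonneg_right hbb hqb.le
          nlinarith
        linarith
      exact ⟨hstrict.le, fun _ => hstrict⟩
  rw [hIcc]
  have hlt : (∑ r ∈ Finset.range (ostN α N + 1), (ostDigit α N r : ℝ) *
      ∑ t ∈ Finset.Icc 1 (qp α r - 1), ((qp α r : ℝ)/(t:ℝ))^β)
      < ∑ r ∈ Finset.range (ostN α N + 1), L * ((ostDigit α N r * qp α r : ℕ) : ℝ)^β := by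
    apply Finset.sum_lt_sum (fun r hr => (hpt r hr).1)
    refine ⟨r0, hr0mem, (hpt r0 hr0mem).2 ?_⟩
    intro h0
    exact hr0 (by rw [h0, Nat.zero_mul])
  have hsum2 : ∑ r ∈ Finset.range (ostN α N + 1), L * ((ostDigit α N r * qp α r : ℕ) : ℝ)^β
      ≤ L * (N:ℝ)^β := by
    rw [← Finset.mul_sum]
    apply mul_le_mul_of_nonneg_left _ hL.le
    have hmain := sum_rpow_le_rpow_sum' (Finset.range (ostN α N + 1))
      (fun r => ((ostDigit α N r * qp α r : ℕ) : ℝ)) (fun i _ => Nat.cast_nonneg _) hβ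
    calc ∑ r ∈ Finset.range (ostN α N + 1), ((ostDigit α N r * qp α r : ℕ) : ℝ)^β
        ≤ (∑ r ∈ Finset.range (ostN α N + 1), ((ostDigit α N r * qp α r : ℕ) : ℝ))^β := hmain
      _ = (N:ℝ)^β := by
          congr 1
          have hc : ((∑ r ∈ Finset.range (ostN α N + 1), ostDigit α N r * qp α r : ℕ) : ℝ)
              = (N:ℝ) := by exact_mod_cast congrArg (Nat.cast : ℕ → ℝ) key
          rw [← hc]
          push_cast
          ring
  rw [mul_comm ((N:ℝ)^β) L]
  linarith

/-- Partition-sum estimates: with `b_r` the canonical Ostrowski digits of `N` and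
`n = ostN α N`, for `β ≥ 1` we have
`Σ_{r=0}^{n} b_r · Σ_{t=1}^{q_r−1} (q_r/t)^β < N^β·(1 + log q_n)`, and if `β > 1` then the
same sum is `< ζ(β)·N^β`. -/
theorem stmt19 (α : ℝ) (hirr : Irrational α) (h0 : 0 < α) (h1 : α < 1)
    (N : ℕ) (hN : 1 ≤ N) (β : ℝ) (hβ : 1 ≤ β) :
    (∑ r ∈ Finset.Icc 0 (ostN α N), (ostDigit α N r : ℝ) *
        ∑ t ∈ Finset.Icc 1 (qp α r - 1), ((qp α r : ℝ) / (t : ℝ)) ^ β) <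
      (N : ℝ) ^ β * (1 + Real.log (qp α (ostN α N))) ∧
    (1 < β →
      (∑ r ∈ Finset.Icc 0 (ostN α N), (ostDigit α N r : ℝ) *
          ∑ t ∈ Finset.Icc 1 (qp α r - 1), ((qp α r : ℝ) / (t : ℝ)) ^ β) <
        (riemannZeta (β : ℂ)).re * (N : ℝ) ^ β) := by
  constructor
  · exact main_est α hirr N hN hβ (1 + Real.log (qp α (ostN α N)))
      (fun r hr => T_lt_log hβ (qp α r) (qp α (ostN α N)) (qp_pos α hirr r)
        (qp_mono α hirr hr))
  · intro hβ'
    have h := main_est α hirr N hN hβ (∑' n : ℕ, 1/(n:ℝ)^β)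
      (fun r _ => T_lt_zeta hβ' (qp α r) (qp_pos α hirr r))
    rw [zeta_re_eq hβ', mul_comm]
    exact h
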